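/- Let φ be a state on ℓ∞(κ). Equip κ with the ⊤ measurable space structure (every subset is measurable), and let μ be a measure on κ such that for every I ⊆ κ, μ(I) equals ν_φ(I) (in particular μ is a probability measure). Then for every f ∈ ℓ∞(κ), φ(f) = ∫ f dμ, the Bochner integral of f : κ → ℂ with respect to μ. -/

import Mathlib

open scoped ENNReal
open MeasureTheory

/-- The indicator function of `I` as an element of `ℓ∞(κ)`. -/
noncomputable def chi {κ : Type*} (I : Set κ) : lp (fun _ : κ => ℂ) ∞ :=
  ⟨I.indicator (fun _ => (1 : ℂ)), memℓp_infty ⟨1, by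
    rintro x ⟨i, rfl⟩
    by_cases h : i ∈ I <;> simp [Set.indicator, h]⟩⟩

/-- A state on `ℓ∞(κ)`: a continuous linear functional with `φ 1 = 1` that takes
nonnegative real values on functions with nonnegative real values. -/
structure IsState {κ : Type*} (φ : lp (fun _ : κ => ℂ) ∞ →L[ℂ] ℂ) : Prop where
  map_one : φ 1 = 1
  nonneg : ∀ f : lp (fun _ : κ => ℂ) ∞,
    (∀ i, ∃ r : ℝ, 0 ≤ r ∧ f i = r) → ∃ r : ℝ, 0 ≤ r ∧ φ f = r

/-!
Both `φ` and `f ↦ ∫ f dμ` are continuous linear functionals on `ℓ∞(κ)`, and by hypothesis they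
agree on every indicator `χ_I`. Functions with finitely many values are linear combinations of
indicators, and since every bounded function has relatively compact range it is a uniform limit of
such functions. So the indicators span a dense subspace and the two functionals coincide.
-/

section

variable {κ : Type*}

lemma chi_apply (I : Set κ) (i : κ) : chi I i = I.indicator (fun _ => (1 : ℂ)) i := rfl

lemma chi_univ : chi (Set.univ : Set κ) = 1 := by
  refine lp.ext (funext fun i => ?_)
  simp [chi_apply]

lemma mem_span_range_chi_of_finite_range {f : lp (fun _ : κ => ℂ) ∞}
    (hf : (Set.range f).Finite) : f ∈ Submodule.span ℂ (Set.range chi) := by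
  have hsum : f = ∑ z ∈ hf.toFinset, z • chi (f ⁻¹' {z}) := by
    ext i
    rw [lp.coeFn_sum, Finset.sum_apply,
      Finset.sum_eq_single_of_mem (f i) (by simp)]
    · simp [chi_apply]
    · intro z _ hz
      simp [chi_apply, Ne.symm hz]
  rw [hsum]
  exact Submodule.sum_mem _ fun z _ => Submodule.smul_mem _ _ (Submodule.subset_span ⟨_, rfl⟩)

lemma exists_finite_range_dist_lt (f : lp (fun _ : κ => ℂ) ∞) {ε : ℝ} (hε : 0 < ε) :
    ∃ g : lp (fun _ : κ => ℂ) ∞, (Set.range g).Finite ∧ dist f g < ε := by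
  obtain ⟨t, -, ht, hcover⟩ := Metric.finite_approx_of_totallyBounded
    (isCompact_closedBall (0 : ℂ) ‖f‖).totallyBounded (ε / 2) (half_pos hε)
  have hnear (i : κ) : ∃ y ∈ t, dist (f i) y < ε / 2 := by
    simpa using hcover (mem_closedBall_zero_iff.mpr (lp.norm_apply_le_norm ENNReal.top_ne_zero f i))
  choose g hgt hg using hnear
  have hrange : (Set.range g).Finite := ht.subset (Set.range_subset_iff.mpr hgt)
  let g' : lp (fun _ : κ => ℂ) ∞ :=
    ⟨g, memℓp_infty (Set.range_comp norm g ▸ (hrange.image norm).bddAbove)⟩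
  refine ⟨g', hrange, ?_⟩
  calc dist f g' ≤ ε / 2 :=
        lp.norm_le_of_forall_le (half_pos hε).le fun i => (hg i).le
    _ < ε := half_lt_self hε

lemma dense_span_range_chi :
    Dense (Submodule.span ℂ (Set.range (@chi κ)) : Set (lp (fun _ : κ => ℂ) ∞)) :=
  fun f => Metric.mem_closure_iff.mpr fun _ hε =>
    let ⟨g, hg, hfg⟩ := exists_finite_range_dist_lt f hε
    ⟨g, mem_span_range_chi_of_finite_range hg, hfg⟩

lemma IsState.isProbabilityMeasure [MeasurableSpace κ] {φ : lp (fun _ : κ => ℂ) ∞ →L[ℂ] ℂ}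
    (hφ : IsState φ) {μ : Measure κ} (hμ : ∀ I : Set κ, φ (chi I) = ((μ I).toReal : ℂ)) :
    IsProbabilityMeasure μ := by
  have h := hμ Set.univ
  rw [chi_univ, hφ.map_one] at h
  exact ⟨(ENNReal.toReal_eq_one_iff _).mp (by exact_mod_cast h.symm)⟩

section Integral

variable [MeasurableSpace κ] [DiscreteMeasurableSpace κ] (μ : Measure κ) [IsFiniteMeasure μ]

lemma integrable_lp_infty (f : lp (fun _ : κ => ℂ) ∞) : Integrable f μ :=
  .of_bound Measurable.of_discrete.aestronglyMeasurable ‖f‖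
    (.of_forall fun i => lp.norm_apply_le_norm ENNReal.top_ne_zero f i)

noncomputable def lpInftyIntegral : lp (fun _ : κ => ℂ) ∞ →L[ℂ] ℂ :=
  LinearMap.mkContinuous
    { toFun f := ∫ i, f i ∂μ
      map_add' f g := integral_add (integrable_lp_infty μ f) (integrable_lp_infty μ g)
      map_smul' c _ := integral_smul c _ }
    (μ.real Set.univ)
    fun f => (norm_integral_le_of_norm_le_const
      (.of_forall fun i => lp.norm_apply_le_norm ENNReal.top_ne_zero f i)).trans_eq (mul_comm _ _)

lemma lpInftyIntegral_apply (f : lp (fun _ : κ => ℂ) ∞) : lpInftyIntegral μ f = ∫ i, f i ∂μ :=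
  rfl

lemma lpInftyIntegral_chi (I : Set κ) : lpInftyIntegral μ (chi I) = μ.real I := by
  simp [lpInftyIntegral_apply, chi_apply, integral_indicator_const _ MeasurableSet.of_discrete]

end Integral

end

theorem stmt_7_general {κ : Type*} [m : MeasurableSpace κ] (hm : m = ⊤)
    (φ : lp (fun _ : κ => ℂ) ∞ →L[ℂ] ℂ) (hφ : IsState φ)
    (μ : MeasureTheory.Measure κ)
    (hμ : ∀ I : Set κ, φ (chi I) = ((μ I).toReal : ℂ)) :
    ∀ f : lp (fun _ : κ => ℂ) ∞, φ f = ∫ i, f i ∂μ := by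
  have : DiscreteMeasurableSpace κ := ⟨fun _ => hm ▸ MeasurableSpace.measurableSet_top⟩
  have := hφ.isProbabilityMeasure hμ
  have hφμ : φ = lpInftyIntegral μ := ContinuousLinearMap.ext_on dense_span_range_chi <| by
    rintro _ ⟨I, rfl⟩
    rw [hμ, lpInftyIntegral_chi, measureReal_def]
  intro f
  rw [hφμ, lpInftyIntegral_apply]

theorem stmt_7 {κ : Type*} [Infinite κ] [m : MeasurableSpace κ] (hm : m = ⊤)
    (φ : lp (fun _ : κ => ℂ) ∞ →L[ℂ] ℂ) (hφ : IsState φ)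
    (μ : MeasureTheory.Measure κ)
    (hμ : ∀ I : Set κ, φ (chi I) = ((μ I).toReal : ℂ)) :
    ∀ f : lp (fun _ : κ => ℂ) ∞, φ f = ∫ i, f i ∂μ :=
  stmt_7_general (m := m) hm φ hφ μ hμ
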